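/- arXiv:2001.05631 — 2 statements merged into one kernel-verified Lean document; each statement's English description precedes it below -/
import Mathlib

section
/- Fix integers ℓ, k ≥ 1 and r ≥ 3 with r ≤ ℓ + k - 2 and ℓ dividing n - k + 1. For n large enough, the maximum number of copies of K_r in an n-vertex graph containing no k pairwise vertex-disjoint copies of the star S_ℓ equals (C(ℓ+k-1, r) - C(k-1, r))·(n-k+1)/ℓ + C(k-1, r). -/
open Finset

/-- Degree of a vertex in a hypergraph (a finite set of hyperedges). -/
def hdeg {V : Type*} [DecidableEq V] (H : Finset (Finset V)) (v : V) : ℕ :=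
  (H.filter (fun e => v ∈ e)).card

/-- A system of distinct representatives of size `c`: `c` distinct hyperedges and
`c` distinct vertices, one vertex in each hyperedge. -/
def HasSDR {V : Type*} (G : Finset (Finset V)) (c : ℕ) : Prop :=
  ∃ (h : Fin c → Finset V) (x : Fin c → V),
    Function.Injective h ∧ Function.Injective x ∧
    ∀ i, h i ∈ G ∧ x i ∈ h i

/-- A hypergraph is linear if any two distinct hyperedges share at most one vertex. -/
def IsLinear {V : Type*} [DecidableEq V] (H : Finset (Finset V)) : Prop :=
  ∀ e ∈ H, ∀ f ∈ H, e ≠ f → (e ∩ f).card ≤ 1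

/-- `S` is a copy of the star expansion `S_ℓ⁺` with center `x`: `ℓ` hyperedges,
all containing `x`, any two distinct ones meeting exactly in `{x}`. -/
def IsStarExpansion {V : Type*} [DecidableEq V] (S : Finset (Finset V)) (x : V) (ℓ : ℕ) : Prop :=
  S.card = ℓ ∧ (∀ e ∈ S, x ∈ e) ∧ ∀ e ∈ S, ∀ f ∈ S, e ≠ f → e ∩ f = {x}

/-- `H` contains `k` pairwise vertex-disjoint copies of the star expansion `S_ℓ⁺`. -/
def ContainsKStarExp {V : Type*} [DecidableEq V] (H : Finset (Finset V)) (k ℓ : ℕ) : Prop :=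
  ∃ (S : Fin k → Finset (Finset V)) (x : Fin k → V),
    (∀ i, S i ⊆ H ∧ IsStarExpansion (S i) (x i) ℓ) ∧
    ∀ i j, i ≠ j → ∀ e ∈ S i, ∀ f ∈ S j, Disjoint e f

/-- `H` contains a Berge copy of the graph `F`: an injection of the vertices and an
injection of the edges of `F` into distinct hyperedges of `H`, each hyperedge
containing the images of the endpoints of its edge. -/
def ContainsBerge {V W : Type*} (H : Finset (Finset V)) (F : SimpleGraph W) : Prop :=
  ∃ (f : W → V) (g : Sym2 W → Finset V),
    Function.Injective f ∧
    Set.InjOn g F.edgeSet ∧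
    (∀ e ∈ F.edgeSet, g e ∈ H) ∧
    ∀ e ∈ F.edgeSet, ∀ u ∈ e, f u ∈ g e

/-- The star `S_ℓ` with `ℓ` edges: center `0` joined to `ℓ` leaves. -/
def starGraph (ℓ : ℕ) : SimpleGraph (Fin (ℓ + 1)) :=
  SimpleGraph.fromRel (fun u _ => u = 0)

/-- `k` pairwise vertex-disjoint copies of the star `S_ℓ`. -/
def kStarGraph (k ℓ : ℕ) : SimpleGraph (Fin k × Fin (ℓ + 1)) :=
  SimpleGraph.fromRel (fun u v => u.1 = v.1 ∧ u.2 = 0)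

/-- Turán number for `k` disjoint star expansions `k ⬝ S_ℓ⁺` in `r`-uniform
`n`-vertex hypergraphs. -/
noncomputable def exKStarExp (n ℓ k r : ℕ) : ℕ :=
  sSup {c | ∃ H : Finset (Finset (Fin n)), (∀ e ∈ H, e.card = r) ∧
    ¬ ContainsKStarExp H k ℓ ∧ H.card = c}

/-- `G` contains a (not nec. induced) copy of `F`. -/
def ContainsCopy {α β : Type*} (G : SimpleGraph α) (F : SimpleGraph β) : Prop :=
  ∃ f : β → α, Function.Injective f ∧ ∀ a b, F.Adj a b → G.Adj (f a) (f b)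

/-- The number of `r`-cliques of a graph on `Fin n`. -/
noncomputable def numKr {n : ℕ} (G : SimpleGraph (Fin n)) (r : ℕ) : ℕ :=
  letI := Classical.decRel G.Adj
  (G.cliqueFinset r).card

namespace KStar
variable {n : ℕ}

def Bc (k ℓ : ℕ) : ℕ := k * (ℓ + 1) + ℓ

def IsStarAt (G : SimpleGraph (Fin n)) (ℓ : ℕ) (x : Fin n) (P : Finset (Fin n)) : Prop :=
  P.card = ℓ ∧ x ∉ P ∧ ∀ y ∈ P, G.Adj x y

def Fam (G : SimpleGraph (Fin n)) (ℓ t : ℕ) (x : Fin t → Fin n)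
    (P : Fin t → Finset (Fin n)) : Prop :=
  (∀ i, IsStarAt G ℓ (x i) (P i)) ∧
  ∀ i j, i ≠ j → Disjoint (insert (x i) (P i)) (insert (x j) (P j))

noncomputable def takeSub {α : Type*} (s : Finset α) (m : ℕ) : Finset α :=
  if h : m ≤ s.card then (Finset.exists_subset_card_eq h).choose else ∅

lemma takeSub_subset {α : Type*} (s : Finset α) (m : ℕ) : takeSub s m ⊆ s := by
  unfold takeSub; split
  · exact (Finset.exists_subset_card_eq ‹_›).choose_spec.1
  · exact empty_subset _

lemma takeSub_card {α : Type*} {s : Finset α} {m : ℕ} (h : m ≤ s.card) :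
    (takeSub s m).card = m := by
  unfold takeSub; rw [dif_pos h]
  exact (Finset.exists_subset_card_eq h).choose_spec.2

lemma takeSub_card_le {α : Type*} (s : Finset α) (m : ℕ) : (takeSub s m).card ≤ m := by
  unfold takeSub; split
  · exact le_of_eq (Finset.exists_subset_card_eq ‹_›).choose_spec.2
  · simp

lemma containsCopy_of_fam {G : SimpleGraph (Fin n)} {ℓ k : ℕ}
    {x : Fin k → Fin n} {P : Fin k → Finset (Fin n)} (hfam : Fam G ℓ k x P) :
    ContainsCopy G (kStarGraph k ℓ) := by
  obtain ⟨hstar, hdisj⟩ := hfam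
  set L : (i : Fin k) → Fin ℓ → Fin n :=
    fun i j => ((P i).orderIsoOfFin (hstar i).1 j : Fin n) with hL
  have hLmem : ∀ i j, L i j ∈ P i := fun i j => ((P i).orderIsoOfFin (hstar i).1 j).2
  have hLinj : ∀ i, Function.Injective (L i) := by
    intro i a b hab
    exact ((P i).orderIsoOfFin (hstar i).1).injective (Subtype.ext hab)
  set f : Fin k × Fin (ℓ + 1) → Fin n :=
    fun p => if h : (p.2 : ℕ) = 0 then x p.1 else
      L p.1 ⟨(p.2 : ℕ) - 1, by have := p.2.isLt; omega⟩ with hf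
  have hmem : ∀ p : Fin k × Fin (ℓ+1), f p ∈ insert (x p.1) (P p.1) := by
    intro p
    by_cases h : (p.2 : ℕ) = 0
    · simp only [hf, dif_pos h]; exact mem_insert_self _ _
    · simp only [hf, dif_neg h]; exact mem_insert_of_mem (hLmem _ _)
  have hsame : ∀ i, Function.Injective (fun u : Fin (ℓ+1) => f (i, u)) := by
    intro i a b hab
    simp only [hf] at hab
    by_cases ha : (a : ℕ) = 0 <;> by_cases hb : (b : ℕ) = 0
    · exact Fin.ext (ha.trans hb.symm)
    · rw [dif_pos ha, dif_neg hb] at hab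
      exact absurd (hab ▸ hLmem i _) (hstar i).2.1
    · rw [dif_neg ha, dif_pos hb] at hab
      exact absurd (hab ▸ hLmem i _ : x i ∈ P i) (hstar i).2.1
    · rw [dif_neg ha, dif_neg hb] at hab
      have h2 : (a:ℕ) - 1 = (b:ℕ) - 1 := congrArg Fin.val (hLinj i hab)
      exact Fin.ext (by omega)
  refine ⟨f, ?_, ?_⟩
  · intro ⟨i, a⟩ ⟨j, b⟩ hab
    rcases eq_or_ne i j with rfl | hij
    · exact congrArg _ (hsame i hab)
    · exact absurd ((hdisj i j hij).forall_ne_finset (hmem (i,a)) (hmem (j,b))) (by simp [hab])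
  · rintro ⟨i, a⟩ ⟨j, b⟩ hadj
    rw [kStarGraph, SimpleGraph.fromRel_adj] at hadj
    obtain ⟨hne, hor⟩ := hadj
    have hij : i = j := by rcases hor with ⟨h, _⟩ | ⟨h, _⟩ <;> simp_all
    subst hij
    have hab : a ≠ b := fun h => hne (by rw [h])
    have key : ∀ u v : Fin (ℓ+1), (u : ℕ) = 0 → (v : ℕ) ≠ 0 → G.Adj (f (i, u)) (f (i, v)) := by
      intro u v hu hv
      simp only [hf, dif_pos hu, dif_neg hv]
      exact (hstar i).2.2 _ (hLmem _ _)
    rcases hor with ⟨_, h0⟩ | ⟨_, h0⟩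
    · have ha0 : (a : ℕ) = 0 := congrArg Fin.val h0
      have hb0 : (b : ℕ) ≠ 0 := fun h => hab (Fin.ext (ha0.trans h.symm))
      exact key a b ha0 hb0
    · have hb0 : (b : ℕ) = 0 := congrArg Fin.val h0
      have ha0 : (a : ℕ) ≠ 0 := fun h => hab (Fin.ext (h.trans hb0.symm))
      exact (key b a hb0 ha0).symm


/-- Greedy extension: `t` given disjoint stars plus `u` high-degree vertices outside them
give a family of `t+u` disjoint stars. -/
lemma greedy_fam (G : SimpleGraph (Fin n)) [DecidableRel G.Adj] {ℓ t u k : ℕ}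
    (htu : t + u = k)
    (x : Fin t → Fin n) (P : Fin t → Finset (Fin n)) (hfam : Fam G ℓ t x P)
    (z : Fin u → Fin n) (hz : Function.Injective z)
    (hzdeg : ∀ i, Bc k ℓ ≤ G.degree (z i))
    (hzout : ∀ i i', z i ∉ insert (x i') (P i')) :
    ∃ (X : Fin k → Fin n) (PP : Fin k → Finset (Fin n)), Fam G ℓ k X PP := by
  classical
  subst htu
  set base : Finset (Fin n) :=
    (Finset.univ.biUnion (fun i : Fin t => insert (x i) (P i))) ∪ (Finset.univ.image z)
    with hbase
  have hbase_card : base.card ≤ t * (ℓ + 1) + u := by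
    refine le_trans (card_union_le _ _) (Nat.add_le_add ?_ ?_)
    · refine le_trans (card_biUnion_le) ?_
      have : ∀ i : Fin t, (insert (x i) (P i)).card ≤ ℓ + 1 := fun i => by
        refine le_trans (card_insert_le _ _) ?_
        rw [(hfam.1 i).1]
      calc ∑ i : Fin t, (insert (x i) (P i)).card ≤ ∑ _i : Fin t, (ℓ + 1) :=
            Finset.sum_le_sum (fun i _ => this i)
        _ = t * (ℓ + 1) := by simp [mul_comm]
    · exact le_trans (card_image_le) (by simp)
  have hold_sub : ∀ i : Fin t, insert (x i) (P i) ⊆ base := by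
    intro i
    exact (subset_biUnion_of_mem (fun i : Fin t => insert (x i) (P i)) (mem_univ i)).trans subset_union_left
  have hz_in : ∀ j : Fin u, z j ∈ base :=
    fun j => mem_union_right _ (mem_image_of_mem z (mem_univ j))
  -- the recursive used-set
  obtain ⟨F, hF0, hFs⟩ : ∃ F : ℕ → Finset (Fin n), F 0 = base ∧
      ∀ j, F (j+1) = if h : j < u then
        F j ∪ takeSub (G.neighborFinset (z ⟨j, h⟩) \ F j) ℓ else F j :=
    ⟨fun i => Nat.rec base (fun j Fj => if h : j < u then
        Fj ∪ takeSub (G.neighborFinset (z ⟨j, h⟩) \ Fj) ℓ else Fj) i, rfl, fun j => rfl⟩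
  set pick : Fin u → Finset (Fin n) :=
    fun j => takeSub (G.neighborFinset (z j) \ F j) ℓ with hpickdef
  have hFstep : ∀ j : Fin u, F (j + 1) = F j ∪ pick j := by
    intro j; rw [hFs j, dif_pos j.isLt]
  have hFmono : ∀ i j : ℕ, i ≤ j → F i ⊆ F j := by
    intro i j hij
    induction j with
    | zero => simpa [Nat.le_zero.mp hij]
    | succ j ih =>
      rcases Nat.lt_or_ge i (j+1) with h | h
      · refine (ih (by omega)).trans ?_
        rw [hFs j]; split
        · exact subset_union_left
        · exact subset_rfl
      · have : i = j + 1 := by omega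
        simp [this]
  have hFcard : ∀ j : ℕ, j ≤ u → (F j).card ≤ t * (ℓ + 1) + u + j * ℓ := by
    intro j
    induction j with
    | zero => intro _; simpa [hF0] using hbase_card
    | succ j ih =>
      intro hju
      rw [hFs j, dif_pos (by omega : j < u)]
      refine le_trans (card_union_le _ _) ?_
      have := ih (by omega)
      have := takeSub_card_le (G.neighborFinset (z ⟨j, by omega⟩) \ F j) ℓ
      have : (j + 1) * ℓ = j * ℓ + ℓ := by ring
      omega
  have hFcard_lt : ∀ j : Fin u, (F j).card ≤ (t + u) * (ℓ + 1) := by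
    intro j
    have h1 := hFcard j (le_of_lt j.isLt)
    have h2 : (j : ℕ) * ℓ + ℓ ≤ u * ℓ := by
      have : ((j : ℕ) + 1) * ℓ ≤ u * ℓ := Nat.mul_le_mul_right ℓ j.isLt
      nlinarith
    nlinarith
  have hpick_spec : ∀ j : Fin u, pick j ⊆ G.neighborFinset (z j) \ F j ∧ (pick j).card = ℓ := by
    intro j
    have hdeg := hzdeg j
    have hcard : ℓ ≤ (G.neighborFinset (z j) \ F j).card := by
      have h1 : (G.neighborFinset (z j)).card - (F j).card ≤
          (G.neighborFinset (z j) \ F j).card := le_card_sdiff _ _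
      have h2 : (G.neighborFinset (z j)).card = G.degree (z j) :=
        G.card_neighborFinset_eq_degree _
      have h3 := hFcard_lt j
      unfold Bc at hdeg
      omega
    exact ⟨takeSub_subset _ _, takeSub_card hcard⟩
  have hpick_nbr : ∀ j : Fin u, pick j ⊆ G.neighborFinset (z j) :=
    fun j => ((hpick_spec j).1).trans (sdiff_subset)
  have hpick_avoid : ∀ j : Fin u, ∀ a ∈ pick j, a ∉ F j := by
    intro j a ha
    exact (mem_sdiff.mp ((hpick_spec j).1 ha)).2
  have hpick_in : ∀ j : Fin u, ∀ a ∈ pick j, a ∈ F (j + 1) := by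
    intro j a ha; rw [hFstep j]; exact mem_union_right _ ha
  have hnew_star : ∀ j : Fin u, IsStarAt G ℓ (z j) (pick j) := by
    intro j
    refine ⟨(hpick_spec j).2, ?_, ?_⟩
    · intro hmem
      exact hpick_avoid j _ hmem (hFmono 0 j (Nat.zero_le _) (hF0 ▸ hz_in j))
    · intro y hy
      exact (G.mem_neighborFinset _ _).mp (hpick_nbr j hy)
  -- disjointness facts
  have hd_old_new : ∀ (i : Fin t) (j : Fin u),
      Disjoint (insert (x i) (P i)) (insert (z j) (pick j)) := by
    intro i j
    rw [Finset.disjoint_left]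
    intro a ha hb
    rcases mem_insert.mp hb with rfl | hb
    · exact hzout j i ha
    · exact hpick_avoid j _ hb (hFmono 0 j (Nat.zero_le _) (hF0 ▸ hold_sub i ha))
  have hd_new_new : ∀ j j' : Fin u, j ≠ j' →
      Disjoint (insert (z j) (pick j)) (insert (z j') (pick j'))  := by
    have key : ∀ j j' : Fin u, (j : ℕ) < (j' : ℕ) →
        Disjoint (insert (z j) (pick j)) (insert (z j') (pick j')) := by
      intro j j' hlt
      rw [Finset.disjoint_left]
      intro a ha hb
      have haF : a ∈ F j' := by
        rcases mem_insert.mp ha with rfl | ha'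
        · exact hFmono 0 j' (Nat.zero_le _) (hF0 ▸ hz_in j)
        · exact hFmono (j+1) j' (by omega) (hpick_in j _ ha')
      rcases mem_insert.mp hb with rfl | hb'
      · rcases mem_insert.mp ha with h | h
        · exact absurd (congrArg Fin.val (hz h)) (by omega)
        · exact hpick_avoid j _ h (hFmono 0 j (Nat.zero_le _) (hF0 ▸ hz_in j'))
      · exact hpick_avoid j' a hb' haF
    intro j j' hne
    rcases lt_trichotomy (j : ℕ) (j' : ℕ) with h | h | h
    · exact key j j' h
    · exact absurd (Fin.ext h) hne
    · exact (key j' j h).symm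
  -- assemble
  refine ⟨fun i => if h : (i : ℕ) < t then x ⟨i, h⟩ else z ⟨(i : ℕ) - t, by have := i.isLt; omega⟩,
          fun i => if h : (i : ℕ) < t then P ⟨i, h⟩ else pick ⟨(i : ℕ) - t, by have := i.isLt; omega⟩,
          ?_, ?_⟩
  · intro i
    by_cases h : (i : ℕ) < t
    · simpa [dif_pos h] using hfam.1 _
    · simpa [dif_neg h] using hnew_star _
  · intro i j hij
    by_cases hi : (i : ℕ) < t <;> by_cases hj : (j : ℕ) < t
    · simp only [dif_pos hi, dif_pos hj]
      exact hfam.2 _ _ (by simp [Fin.ext_iff]; intro h; exact hij (Fin.ext h))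
    · simp only [dif_pos hi, dif_neg hj]
      exact hd_old_new _ _
    · simp only [dif_neg hi, dif_pos hj]
      exact (hd_old_new _ _).symm
    · simp only [dif_neg hi, dif_neg hj]
      refine hd_new_new _ _ ?_
      simp only [ne_eq, Fin.ext_iff]
      intro h
      exact hij (Fin.ext (by omega))


lemma exists_blocker (G : SimpleGraph (Fin n)) [DecidableRel G.Adj] (ℓ : ℕ) (j : ℕ)
    (U : Finset (Fin n))
    (hfree : ¬ ∃ (x : Fin j → Fin n) (P : Fin j → Finset (Fin n)),
        Fam G ℓ j x P ∧ ∀ i, insert (x i) (P i) ⊆ U) :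
    ∃ X ⊆ U, X.card ≤ (j - 1) * (ℓ + 1) ∧
      ∀ v ∈ U, v ∉ X → ((G.neighborFinset v) ∩ (U \ X)).card < ℓ := by
  induction j generalizing U with
  | zero =>
    exact absurd ⟨Fin.elim0, Fin.elim0, ⟨fun i => i.elim0, fun i => i.elim0⟩,
      fun i => i.elim0⟩ hfree
  | succ j ih =>
    by_cases hv : ∃ v ∈ U, ℓ ≤ ((G.neighborFinset v) ∩ U).card
    · obtain ⟨v, hvU, hvdeg⟩ := hv
      set P0 := takeSub ((G.neighborFinset v) ∩ U) ℓ with hP0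
      have hP0sub : P0 ⊆ (G.neighborFinset v) ∩ U := takeSub_subset _ _
      have hP0card : P0.card = ℓ := takeSub_card hvdeg
      have hstar0 : IsStarAt G ℓ v P0 :=
        ⟨hP0card,
         fun hmem => G.irrefl ((G.mem_neighborFinset _ _).mp (mem_inter.mp (hP0sub hmem)).1),
         fun y hy => (G.mem_neighborFinset _ _).mp (mem_inter.mp (hP0sub hy)).1⟩
      set Y := insert v P0 with hY
      have hYU : Y ⊆ U := insert_subset hvU (hP0sub.trans inter_subset_right)
      have hYcard : Y.card ≤ ℓ + 1 := le_trans (card_insert_le _ _) (by rw [hP0card])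
      rcases Nat.eq_zero_or_pos j with rfl | hj
      · exact absurd ⟨fun _ => v, fun _ => P0,
          ⟨fun _ => hstar0, fun i j hij => absurd (Fin.ext (by omega)) hij⟩,
          fun _ => hYU⟩ hfree
      · have hfree' : ¬ ∃ (x : Fin j → Fin n) (P : Fin j → Finset (Fin n)),
            Fam G ℓ j x P ∧ ∀ i, insert (x i) (P i) ⊆ U \ Y := by
          rintro ⟨x, P, ⟨hst, hdj⟩, hsub⟩
          have hD0 : ∀ i' : Fin j, Disjoint Y (insert (x i') (P i')) :=
            fun i' => Finset.disjoint_sdiff.mono_right (hsub i')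
          refine hfree ⟨Fin.cons v x, Fin.cons P0 P, ⟨?_, ?_⟩, ?_⟩
          · intro i
            rcases Fin.eq_zero_or_eq_succ i with rfl | ⟨i', rfl⟩ <;>
              simp [Fin.cons_zero, Fin.cons_succ, hstar0, hst]
          · intro a b hab
            rcases Fin.eq_zero_or_eq_succ a with rfl | ⟨a', rfl⟩ <;>
              rcases Fin.eq_zero_or_eq_succ b with rfl | ⟨b', rfl⟩
            · exact absurd rfl hab
            · simpa only [Fin.cons_zero, Fin.cons_succ] using hD0 b'
            · simpa only [Fin.cons_zero, Fin.cons_succ] using (hD0 a').symm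
            · simp only [Fin.cons_succ]
              exact hdj a' b' (fun h => hab (by rw [h]))
          · intro i
            rcases Fin.eq_zero_or_eq_succ i with rfl | ⟨i', rfl⟩
            · simpa [Fin.cons_zero] using hYU
            · simp only [Fin.cons_succ]
              exact (hsub i').trans sdiff_subset
        obtain ⟨X', hX'sub, hX'card, hX'deg⟩ := ih (U \ Y) hfree'
        refine ⟨Y ∪ X', union_subset hYU (hX'sub.trans sdiff_subset), ?_, ?_⟩
        · refine le_trans (card_union_le _ _) ?_
          have h1 : (1 + (j - 1)) * (ℓ + 1) = j * (ℓ + 1) := by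
            congr 1; omega
          calc Y.card + X'.card ≤ (ℓ + 1) + (j - 1) * (ℓ + 1) := Nat.add_le_add hYcard hX'card
            _ = (1 + (j - 1)) * (ℓ + 1) := by ring
            _ = j * (ℓ + 1) := h1
            _ = (j + 1 - 1) * (ℓ + 1) := by norm_num
        · intro w hwU hwYX
          have hwY : w ∉ Y := fun h => hwYX (mem_union_left _ h)
          have hwX' : w ∉ X' := fun h => hwYX (mem_union_right _ h)
          have := hX'deg w (mem_sdiff.mpr ⟨hwU, hwY⟩) hwX'
          have hEq : (U \ Y) \ X' = U \ (Y ∪ X') := sdiff_sdiff _ _ _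
          rwa [hEq] at this
    · push_neg at hv
      refine ⟨∅, empty_subset _, by simp, ?_⟩
      intro v hvU _
      simpa using hv v hvU


/-- Cliques of size `s+1` all containing `v` with links inside `T` number at most `C(|T|,s)`. -/
lemma erase_inj_bound (A : Finset (Finset (Fin n))) (v : Fin n) (T : Finset (Fin n)) (s : ℕ)
    (hA : ∀ S ∈ A, S.card = s + 1 ∧ v ∈ S ∧ S.erase v ⊆ T) :
    A.card ≤ T.card.choose s := by
  classical
  have h1 : A.card ≤ (T.powersetCard s).card := by
    refine Finset.card_le_card_of_injOn (fun S : Finset (Fin n) => S.erase v) ?_ ?_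
    · intro S hS
      obtain ⟨hc, hv, hsub⟩ := hA S hS
      rw [mem_coe, mem_powersetCard]
      refine ⟨hsub, ?_⟩
      show (S.erase v).card = s
      rw [card_erase_of_mem hv, hc]; rfl
    · intro S hS S' hS' h
      have h' : S.erase v = S'.erase v := h
      have hvS := (hA S (by simpa using hS)).2.1
      have hvS' := (hA S' (by simpa using hS')).2.1
      rw [← insert_erase hvS, ← insert_erase hvS', h']
  simpa [Finset.card_powersetCard] using h1

/-- Decomposition of `r`-cliques according to the part outside `D`. -/
lemma clique_decomp (G : SimpleGraph (Fin n)) [DecidableRel G.Adj] (D : Finset (Fin n)) (r : ℕ) :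
    (G.cliqueFinset r).card ≤
      ∑ s ∈ range (r + 1),
        ((G.cliqueFinset s).filter (fun S => Disjoint S D)).card * (D.card).choose (r - s) := by
  classical
  have hcov : G.cliqueFinset r ⊆ (range (r+1)).biUnion
      (fun s => (G.cliqueFinset r).filter (fun K => (K \ D).card = s)) := by
    intro K hK
    rw [mem_biUnion]
    refine ⟨(K \ D).card, ?_, by simp [hK]⟩
    rw [mem_range]
    have hKr : K.card = r := ((SimpleGraph.mem_cliqueFinset_iff).mp hK).card_eq
    have := card_le_card (sdiff_subset (s := K) (t := D))
    omega
  refine le_trans (card_le_card hcov) (le_trans (card_biUnion_le) (Finset.sum_le_sum ?_))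
  intro s _
  set fil := (G.cliqueFinset r).filter (fun K => (K \ D).card = s) with hfil
  have key : fil.card ≤ (D.card).choose (r - s) * ((fil.image (fun K => K \ D)).card) := by
    refine Finset.card_le_mul_card_image fil _ ?_
    intro S₀ _
    refine le_trans (Finset.card_le_card_of_injOn (fun K : Finset (Fin n) => K ∩ D)
      (t := D.powersetCard (r - s)) ?_ ?_) ?_
    · intro K hK
      simp only [mem_coe, mem_filter, hfil] at hK
      obtain ⟨⟨hKcl, hKs⟩, _⟩ := hK
      have hKr : K.card = r := ((SimpleGraph.mem_cliqueFinset_iff).mp hKcl).card_eq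
      rw [mem_coe, mem_powersetCard]
      refine ⟨inter_subset_right, ?_⟩
      show (K ∩ D).card = r - s
      have := Finset.card_inter_add_card_sdiff K D
      omega
    · intro K hK K' hK' h
      have h' : K ∩ D = K' ∩ D := h
      have hK2 := mem_coe.mp hK
      have hK2' := mem_coe.mp hK'
      simp only [mem_filter] at hK2 hK2'
      have hKd : K \ D = S₀ := hK2.2
      have hK'd : K' \ D = S₀ := hK2'.2
      rw [← Finset.sdiff_union_inter K D, ← Finset.sdiff_union_inter K' D, hKd, hK'd, h']
    · rw [Finset.card_powersetCard]
  have himg : fil.image (fun K => K \ D) ⊆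
      (G.cliqueFinset s).filter (fun S => Disjoint S D) := by
    intro S hS
    rw [mem_image] at hS
    obtain ⟨K, hK, rfl⟩ := hS
    simp only [mem_filter, hfil] at hK ⊢
    obtain ⟨hKcl, hKs⟩ := hK
    have hcl := (SimpleGraph.mem_cliqueFinset_iff).mp hKcl
    exact ⟨(SimpleGraph.mem_cliqueFinset_iff).mpr ⟨hcl.1.subset (coe_subset.mpr sdiff_subset), hKs⟩,
      sdiff_disjoint⟩
  calc fil.card ≤ (D.card).choose (r - s) * ((fil.image (fun K => K \ D)).card) := key
    _ ≤ (D.card).choose (r - s) * ((G.cliqueFinset s).filter (fun S => Disjoint S D)).card :=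
        Nat.mul_le_mul_left _ (card_le_card himg)
    _ = _ := Nat.mul_comm _ _


lemma meet_bound (G : SimpleGraph (Fin n)) [DecidableRel G.Adj] (A : Finset (Finset (Fin n)))
    (X : Finset (Fin n)) (B s : ℕ)
    (hA : ∀ S ∈ A, S ∈ G.cliqueFinset (s + 1))
    (hX : ∀ x ∈ X, G.degree x < B) :
    (A.filter (fun S => ¬ Disjoint S X)).card ≤ X.card * B.choose s := by
  classical
  have hcov : A.filter (fun S => ¬ Disjoint S X) ⊆
      X.biUnion (fun x => A.filter (fun S => x ∈ S)) := by
    intro S hS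
    rw [mem_filter] at hS
    obtain ⟨a, haS, haX⟩ := Finset.not_disjoint_iff.mp hS.2
    exact mem_biUnion.mpr ⟨a, haX, mem_filter.mpr ⟨hS.1, haS⟩⟩
  refine le_trans (card_le_card hcov) (le_trans card_biUnion_le ?_)
  have hone : ∀ x ∈ X, (A.filter (fun S => x ∈ S)).card ≤ B.choose s := by
    intro x hx
    have h1 : (A.filter (fun S => x ∈ S)).card ≤ (G.neighborFinset x).card.choose s := by
      refine erase_inj_bound _ x _ s ?_
      intro S hS
      rw [mem_filter] at hS
      have hcl := (SimpleGraph.mem_cliqueFinset_iff).mp (hA S hS.1)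
      refine ⟨hcl.card_eq, hS.2, ?_⟩
      intro y hy
      rw [mem_erase] at hy
      rw [SimpleGraph.mem_neighborFinset]
      exact hcl.1 (by exact_mod_cast hS.2) (by exact_mod_cast hy.2) (Ne.symm hy.1)
    refine le_trans h1 (Nat.choose_le_choose s ?_)
    rw [G.card_neighborFinset_eq_degree]
    exact le_of_lt (hX x hx)
  calc ∑ x ∈ X, (A.filter (fun S => x ∈ S)).card ≤ ∑ _x ∈ X, B.choose s :=
        Finset.sum_le_sum hone
    _ = X.card * B.choose s := by rw [Finset.sum_const, smul_eq_mul]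

lemma avoid_bound (G : SimpleGraph (Fin n)) [DecidableRel G.Adj] (A : Finset (Finset (Fin n)))
    (W : Finset (Fin n)) (ℓ s : ℕ)
    (hA : ∀ S ∈ A, S ∈ G.cliqueFinset (s + 1) ∧ S ⊆ W)
    (hW : ∀ v ∈ W, (G.neighborFinset v ∩ W).card ≤ ℓ - 1) :
    (s + 1) * A.card ≤ W.card * (ℓ - 1).choose s := by
  classical
  have hcard : ∀ S ∈ A, S.card = s + 1 :=
    fun S hS => ((SimpleGraph.mem_cliqueFinset_iff).mp (hA S hS).1).card_eq
  have e1 : (s + 1) * A.card = ∑ S ∈ A, S.card := by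
    rw [Finset.sum_congr rfl hcard, Finset.sum_const, smul_eq_mul, Nat.mul_comm]
  have e2 : ∀ S ∈ A, S.card = (W.filter (fun v => v ∈ S)).card := by
    intro S hS
    rw [Finset.filter_mem_eq_inter, Finset.inter_eq_right.mpr (hA S hS).2]
  have e3 : ∑ S ∈ A, S.card = ∑ v ∈ W, (A.filter (fun S => v ∈ S)).card := by
    rw [Finset.sum_congr rfl e2]
    simp only [Finset.card_filter]
    exact Finset.sum_comm
  have hone : ∀ v ∈ W, (A.filter (fun S => v ∈ S)).card ≤ (ℓ - 1).choose s := by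
    intro v hv
    have h1 : (A.filter (fun S => v ∈ S)).card ≤ (G.neighborFinset v ∩ W).card.choose s := by
      refine erase_inj_bound _ v _ s ?_
      intro S hS
      rw [mem_filter] at hS
      have hcl := (SimpleGraph.mem_cliqueFinset_iff).mp (hA S hS.1).1
      refine ⟨hcl.card_eq, hS.2, ?_⟩
      intro y hy
      rw [mem_erase] at hy
      rw [mem_inter, SimpleGraph.mem_neighborFinset]
      exact ⟨hcl.1 (by exact_mod_cast hS.2) (by exact_mod_cast hy.2) (Ne.symm hy.1),
        (hA S hS.1).2 hy.2⟩
    exact le_trans h1 (Nat.choose_le_choose s (hW v hv))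
  calc (s + 1) * A.card = ∑ v ∈ W, (A.filter (fun S => v ∈ S)).card := by rw [e1, e3]
    _ ≤ ∑ _v ∈ W, (ℓ - 1).choose s := Finset.sum_le_sum hone
    _ = W.card * (ℓ - 1).choose s := by rw [Finset.sum_const, smul_eq_mul]


def Qs (ℓ k r : ℕ) : ℕ := ∑ s ∈ range r, ℓ.choose (s+1) * (k-1).choose (r-(s+1))

lemma vand (ℓ k r : ℕ) (hk : 1 ≤ k) :
    (k-1).choose r + Qs ℓ k r = (ℓ + k - 1).choose r := by
  have h1 : ℓ + k - 1 = ℓ + (k-1) := by omega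
  rw [h1, Nat.add_choose_eq, Finset.Nat.sum_antidiagonal_eq_sum_range_succ_mk,
    Finset.sum_range_succ']
  simp [Qs, add_comm]

lemma sum_strict_at {f g : ℕ → ℕ} {r s₀ : ℕ} (hs₀ : s₀ ∈ range r)
    (hmono : ∀ s ∈ range r, f s ≤ g s) (hstrict : f s₀ + 1 ≤ g s₀) :
    (∑ s ∈ range r, f s) + 1 ≤ ∑ s ∈ range r, g s := by
  rw [← Finset.add_sum_erase _ f hs₀, ← Finset.add_sum_erase _ g hs₀]
  have := Finset.sum_le_sum (s := (range r).erase s₀) (f := f) (g := g)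
    (fun s hs => hmono s (mem_of_mem_erase hs))
  omega

lemma strict_coeff {ℓ k r d : ℕ} (hℓ : 1 ≤ ℓ) (hr : 2 ≤ r) (hrlk : r ≤ ℓ + k - 2)
    (hd : d + 2 ≤ k) :
    (∑ s ∈ range r, ℓ.choose (s+1) * d.choose (r-(s+1))) + 1 ≤ Qs ℓ k r := by
  have hmono : ∀ s ∈ range r,
      ℓ.choose (s+1) * d.choose (r-(s+1)) ≤ ℓ.choose (s+1) * (k-1).choose (r-(s+1)) :=
    fun s _ => Nat.mul_le_mul_left _ (Nat.choose_le_choose _ (by omega))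
  by_cases hcase : r ≤ k - 1
  · refine sum_strict_at (mem_range.mpr (by omega)) hmono ?_ (s₀ := 0)
    have hlt : d.choose (r-1) < (k-1).choose (r-1) := by
      have e1 : k - 1 = (k-2) + 1 := by omega
      have e2 : r - 1 = (r-2) + 1 := by omega
      have hpas : (k-1).choose (r-1) = (k-2).choose (r-2) + (k-2).choose ((r-2)+1) := by
        rw [e1, e2, Nat.choose_succ_succ]
      have h1 : d.choose (r-1) ≤ (k-2).choose (r-1) := Nat.choose_le_choose _ (by omega)
      have h2 : 0 < (k-2).choose (r-2) := Nat.choose_pos (by omega)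
      rw [← e2] at hpas
      omega
    show ℓ.choose 1 * d.choose (r-1) + 1 ≤ ℓ.choose 1 * (k-1).choose (r-1)
    rw [Nat.choose_one_right]
    calc ℓ * d.choose (r-1) + 1 ≤ ℓ * d.choose (r-1) + ℓ := by omega
      _ = ℓ * (d.choose (r-1) + 1) := by ring
      _ ≤ ℓ * (k-1).choose (r-1) := Nat.mul_le_mul_left _ (by omega)
  · refine sum_strict_at (mem_range.mpr (by omega)) hmono ?_ (s₀ := r - k)
    have e1 : r - (r - k + 1) = k - 1 := by omega
    rw [e1, Nat.choose_self, Nat.choose_eq_zero_of_lt (by omega : d < k - 1),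
      mul_zero, mul_one]
    exact Nat.choose_pos (by omega : r - k + 1 ≤ ℓ)



def K1 (ℓ k r : ℕ) : ℕ := ∑ s ∈ range r, (Bc k ℓ).choose s * (k-1).choose (r-(s+1))

def Nb (ℓ k r : ℕ) : ℕ :=
  ℓ * (k * Qs ℓ k r + k * (ℓ+1) * K1 ℓ k r + k + ℓ + 10) + k + ℓ + 10

lemma upper (G : SimpleGraph (Fin n)) [DecidableRel G.Adj] {ℓ k r : ℕ}
    (hℓ : 1 ≤ ℓ) (hk : 1 ≤ k) (hr : 3 ≤ r) (hrlk : r ≤ ℓ + k - 2)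
    (hN : Nb ℓ k r ≤ n) (hdvd : ℓ ∣ (n - k + 1))
    (hfree : ¬ ContainsCopy G (kStarGraph k ℓ)) :
    (G.cliqueFinset r).card ≤ Qs ℓ k r * ((n - k + 1) / ℓ) + (k-1).choose r := by
  classical
  have hnk : k + ℓ + 10 ≤ n := le_trans (by unfold Nb; omega) hN
  set D := univ.filter (fun v : Fin n => Bc k ℓ ≤ G.degree v) with hD
  set d := D.card with hd
  -- at most k-1 high-degree vertices
  have hdk : d ≤ k - 1 := by
    by_contra hcon
    push_neg at hcon
    obtain ⟨D', hD'sub, hD'card⟩ := Finset.exists_subset_card_eq (show k ≤ D.card by omega)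
    set z : Fin k → Fin n := fun i => ((D'.orderIsoOfFin hD'card) i : Fin n) with hz
    have hzinj : Function.Injective z := fun a b hab =>
      (D'.orderIsoOfFin hD'card).injective (Subtype.ext hab)
    have hzdeg : ∀ i, Bc k ℓ ≤ G.degree (z i) := by
      intro i
      have hmem : z i ∈ D := hD'sub ((D'.orderIsoOfFin hD'card) i).2
      rw [hD, mem_filter] at hmem
      exact hmem.2
    obtain ⟨XX, PP, hfam⟩ := greedy_fam G (t := 0) (u := k) (by omega) Fin.elim0 Fin.elim0
      ⟨fun i => i.elim0, fun i => i.elim0⟩ z hzinj hzdeg (fun i i' => i'.elim0)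
    exact hfree (containsCopy_of_fam hfam)
  have hDlow : ∀ v : Fin n, v ∉ D → G.degree v < Bc k ℓ := by
    intro v hv
    rw [hD, mem_filter] at hv
    push_neg at hv
    exact hv (mem_univ v)
  set U : Finset (Fin n) := univ \ D with hU
  set j := k - d with hj
  -- no j disjoint stars inside U
  have hUfree : ¬ ∃ (x : Fin j → Fin n) (P : Fin j → Finset (Fin n)),
      Fam G ℓ j x P ∧ ∀ i, insert (x i) (P i) ⊆ U := by
    rintro ⟨x, P, hfam, hsub⟩
    set z : Fin d → Fin n := fun i => ((D.orderIsoOfFin hd.symm) i : Fin n) with hz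
    have hzinj : Function.Injective z := fun a b hab =>
      (D.orderIsoOfFin hd.symm).injective (Subtype.ext hab)
    have hzD : ∀ i, z i ∈ D := fun i => ((D.orderIsoOfFin hd.symm) i).2
    have hzdeg : ∀ i, Bc k ℓ ≤ G.degree (z i) := by
      intro i
      have := hzD i
      rw [hD, mem_filter] at this
      exact this.2
    have hzout : ∀ (i : Fin d) (i' : Fin j), z i ∉ insert (x i') (P i') := by
      intro i i' hmem
      exact (mem_sdiff.mp (hsub i' hmem)).2 (hzD i)
    obtain ⟨XX, PP, hfam'⟩ := greedy_fam G (show j + d = k by omega) x P hfam z hzinj hzdeg hzout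
    exact hfree (containsCopy_of_fam hfam')
  obtain ⟨X, hXU, hXcard, hXdeg⟩ := exists_blocker G ℓ j U hUfree
  have hWdeg : ∀ v ∈ U \ X, (G.neighborFinset v ∩ (U \ X)).card ≤ ℓ - 1 := by
    intro v hv
    rw [mem_sdiff] at hv
    have := hXdeg v hv.1 hv.2
    omega
  set A : ℕ → Finset (Finset (Fin n)) :=
    fun s => (G.cliqueFinset s).filter (fun S => Disjoint S D) with hA
  have decomp := clique_decomp G D r
  have hA0 : (A 0).card ≤ 1 := by
    have hsub : A 0 ⊆ {∅} := by
      intro S hS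
      rw [hA, mem_filter] at hS
      have := ((SimpleGraph.mem_cliqueFinset_iff).mp hS.1).card_eq
      rw [mem_singleton]
      exact card_eq_zero.mp this
    simpa using card_le_card hsub
  have hAcl : ∀ s, ∀ S ∈ A (s+1), S ∈ G.cliqueFinset (s+1) := by
    intro s S hS; rw [hA, mem_filter] at hS; exact hS.1
  have hXdegB : ∀ x ∈ X, G.degree x < Bc k ℓ := by
    intro x hx
    exact hDlow x (fun hxD => (mem_sdiff.mp (hXU hx)).2 hxD)
  -- choose-identity  ℓ * C(ℓ-1, s) = C(ℓ, s+1) * (s+1)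
  have hid : ∀ s, ℓ * (ℓ - 1).choose s = ℓ.choose (s+1) * (s+1) := by
    intro s
    have := Nat.add_one_mul_choose_eq (ℓ - 1) s
    have hsucc : ℓ - 1 + 1 = ℓ := by omega
    rwa [hsucc] at this
  have havoid : ∀ (s : ℕ) (Av : Finset (Finset (Fin n))),
      (∀ S ∈ Av, S ∈ G.cliqueFinset (s+1) ∧ S ⊆ U \ X) →
      (s + 1) * Av.card ≤ (U \ X).card * (ℓ - 1).choose s := by
    intro s Av hyp
    exact avoid_bound G Av (U \ X) ℓ s hyp hWdeg
  by_cases hcase : d = k - 1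
  -- ===== exact case =====
  · have hXempty : X = ∅ := by
      refine card_eq_zero.mp ?_
      have : (j - 1) * (ℓ + 1) = 0 := by
        have : j - 1 = 0 := by omega
        rw [this, Nat.zero_mul]
      omega
    have hUX : U \ X = U := by rw [hXempty, sdiff_empty]
    have hUcard : U.card = n - k + 1 := by
      rw [hU, card_sdiff_of_subset (subset_univ D), card_univ, Fintype.card_fin]
      omega
    set m := (n - k + 1) / ℓ with hm
    have hℓm : ℓ * m = n - k + 1 := Nat.mul_div_cancel' hdvd
    have per_s : ∀ s, (A (s+1)).card ≤ m * ℓ.choose (s+1) := by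
      intro s
      have hyp : ∀ S ∈ A (s+1), S ∈ G.cliqueFinset (s+1) ∧ S ⊆ U \ X := by
        intro S hS
        refine ⟨hAcl s S hS, ?_⟩
        rw [hUX]
        intro v hv
        rw [hA, mem_filter] at hS
        rw [hU, mem_sdiff]
        exact ⟨mem_univ v, Finset.disjoint_left.mp hS.2 hv⟩
      have h1 := havoid s (A (s+1)) hyp
      rw [hUX, hUcard, ← hℓm] at h1
      have h2 : (s + 1) * (A (s+1)).card ≤ (s + 1) * (m * ℓ.choose (s+1)) := by
        calc (s + 1) * (A (s+1)).card ≤ ℓ * m * (ℓ - 1).choose s := h1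
          _ = m * (ℓ * (ℓ - 1).choose s) := by ring
          _ = m * (ℓ.choose (s+1) * (s+1)) := by rw [hid s]
          _ = (s + 1) * (m * ℓ.choose (s+1)) := by ring
      exact Nat.le_of_mul_le_mul_left h2 (Nat.succ_pos s)
    calc (G.cliqueFinset r).card
        ≤ ∑ s ∈ range (r+1), (A s).card * d.choose (r - s) := decomp
      _ = ∑ s ∈ range r, (A (s+1)).card * d.choose (r - (s+1)) + (A 0).card * d.choose r := by
          rw [Finset.sum_range_succ' (fun s => (A s).card * d.choose (r - s)) r, Nat.sub_zero]
      _ ≤ ∑ s ∈ range r, (m * ℓ.choose (s+1)) * (k-1).choose (r - (s+1)) + 1 * (k-1).choose r := by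
          refine Nat.add_le_add (Finset.sum_le_sum ?_) ?_
          · intro s _
            exact Nat.mul_le_mul (per_s s) (Nat.choose_le_choose _ (by omega))
          · exact Nat.mul_le_mul hA0 (Nat.choose_le_choose _ (by omega))
      _ = Qs ℓ k r * m + (k-1).choose r := by
          rw [Nat.one_mul, Qs, Finset.sum_mul]
          congr 1
          refine Finset.sum_congr rfl ?_
          intro s _
          ring
  -- ===== slack case =====
  · have hd2 : d + 2 ≤ k := by omega
    set m := (n - k + 1) / ℓ with hm
    set M := n / ℓ + 1 with hM
    set Qd := ∑ s ∈ range r, ℓ.choose (s+1) * d.choose (r-(s+1)) with hQd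
    have hWn : (U \ X).card ≤ n := by
      refine le_trans (card_le_card (subset_univ _)) ?_
      rw [card_univ, Fintype.card_fin]
    have hnM : n ≤ ℓ * M := by
      have h1 := Nat.div_add_mod n ℓ
      have h2 : n % ℓ < ℓ := Nat.mod_lt n (by omega)
      have h3 : ℓ * M = ℓ * (n / ℓ) + ℓ := by rw [hM]; ring
      omega
    have per_s : ∀ s, (A (s+1)).card ≤ M * ℓ.choose (s+1) + X.card * (Bc k ℓ).choose s := by
      intro s
      have hsplit := Finset.card_filter_add_card_filter_not
        (s := A (s+1)) (p := fun S => Disjoint S X)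
      have hmeet : ((A (s+1)).filter (fun S => ¬ Disjoint S X)).card ≤
          X.card * (Bc k ℓ).choose s :=
        meet_bound G (A (s+1)) X (Bc k ℓ) s (hAcl s) hXdegB
      have hav : ((A (s+1)).filter (fun S => Disjoint S X)).card ≤ M * ℓ.choose (s+1) := by
        have hyp : ∀ S ∈ (A (s+1)).filter (fun S => Disjoint S X),
            S ∈ G.cliqueFinset (s+1) ∧ S ⊆ U \ X := by
          intro S hS
          rw [mem_filter] at hS
          refine ⟨hAcl s S hS.1, ?_⟩
          intro v hv
          have hSA := hS.1
          rw [hA, mem_filter] at hSA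
          rw [mem_sdiff, hU, mem_sdiff]
          exact ⟨⟨mem_univ v, Finset.disjoint_left.mp hSA.2 hv⟩,
            Finset.disjoint_left.mp hS.2 hv⟩
        have h1 := havoid s _ hyp
        have h2 : (s + 1) * ((A (s+1)).filter (fun S => Disjoint S X)).card ≤
            (s + 1) * (M * ℓ.choose (s+1)) := by
          calc (s + 1) * ((A (s+1)).filter (fun S => Disjoint S X)).card
              ≤ (U \ X).card * (ℓ - 1).choose s := h1
            _ ≤ (ℓ * M) * (ℓ - 1).choose s := Nat.mul_le_mul_right _ (le_trans hWn hnM)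
            _ = M * (ℓ * (ℓ - 1).choose s) := by ring
            _ = M * (ℓ.choose (s+1) * (s+1)) := by rw [hid s]
            _ = (s + 1) * (M * ℓ.choose (s+1)) := by ring
        exact Nat.le_of_mul_le_mul_left h2 (Nat.succ_pos s)
      omega
    have total : (G.cliqueFinset r).card ≤
        M * Qd + (k * (ℓ+1)) * K1 ℓ k r + (k-1).choose r := by
      have hXB : X.card ≤ k * (ℓ + 1) := by
        refine le_trans hXcard ?_
        exact Nat.mul_le_mul_right _ (by omega)
      calc (G.cliqueFinset r).card
          ≤ ∑ s ∈ range (r+1), (A s).card * d.choose (r - s) := decomp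
        _ = ∑ s ∈ range r, (A (s+1)).card * d.choose (r - (s+1)) + (A 0).card * d.choose r := by
            rw [Finset.sum_range_succ' (fun s => (A s).card * d.choose (r - s)) r, Nat.sub_zero]
        _ ≤ ∑ s ∈ range r, (M * ℓ.choose (s+1) + (k * (ℓ+1)) * (Bc k ℓ).choose s)
              * d.choose (r - (s+1)) + 1 * (k-1).choose r := by
            refine Nat.add_le_add (Finset.sum_le_sum ?_) ?_
            · intro s _
              refine Nat.mul_le_mul_right _ ?_
              refine le_trans (per_s s) ?_
              exact Nat.add_le_add_left (Nat.mul_le_mul_right _ hXB) _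
            · exact Nat.mul_le_mul hA0 (Nat.choose_le_choose _ (by omega))
        _ ≤ M * Qd + (k * (ℓ+1)) * K1 ℓ k r + (k-1).choose r := by
            rw [Nat.one_mul]
            refine Nat.add_le_add_right ?_ _
            have expand : ∀ s ∈ range r,
                (M * ℓ.choose (s+1) + (k * (ℓ+1)) * (Bc k ℓ).choose s) * d.choose (r - (s+1)) =
                M * (ℓ.choose (s+1) * d.choose (r - (s+1))) +
                (k * (ℓ+1)) * ((Bc k ℓ).choose s * d.choose (r - (s+1))) := by
              intro s _; ring
            rw [Finset.sum_congr rfl expand, Finset.sum_add_distrib, ← Finset.mul_sum,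
              ← Finset.mul_sum]
            refine Nat.add_le_add ?_ ?_
            · exact le_of_eq rfl
            · refine Nat.mul_le_mul_left _ ?_
              rw [K1]
              refine Finset.sum_le_sum ?_
              intro s _
              exact Nat.mul_le_mul_left _ (Nat.choose_le_choose _ (by omega))
    have hstrict : Qd + 1 ≤ Qs ℓ k r := strict_coeff hℓ (by omega) hrlk hd2
    have hMm : M ≤ m + k := by
      have h1 : n = (n - k + 1) + (k - 1) := by omega
      have h2 : n / ℓ ≤ (n - k + 1) / ℓ + (k - 1) := by
        calc n / ℓ = ((n - k + 1) + (k-1)) / ℓ := by rw [← h1]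
          _ ≤ ((n - k + 1) + (k-1) * ℓ) / ℓ := by
              refine Nat.div_le_div_right ?_
              refine Nat.add_le_add_left ?_ _
              exact Nat.le_mul_of_pos_right _ (by omega)
          _ = (n - k + 1) / ℓ + (k-1) := Nat.add_mul_div_right _ _ (by omega)
      omega
    have hm_big : k * Qs ℓ k r + (k * (ℓ+1)) * K1 ℓ k r + k ≤ m := by
      rw [hm]
      rw [Nat.le_div_iff_mul_le (by omega : 0 < ℓ)]
      have e : ℓ * (k * Qs ℓ k r + k * (ℓ+1) * K1 ℓ k r + k + ℓ + 10) =
          (k * Qs ℓ k r + (k * (ℓ+1)) * K1 ℓ k r + k) * ℓ + ℓ * (ℓ + 10) := by ring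
      unfold Nb at hN
      omega
    have h1 : M * Qd ≤ m * Qd + k * Qd := by
      calc M * Qd ≤ (m + k) * Qd := Nat.mul_le_mul_right _ hMm
        _ = m * Qd + k * Qd := by ring
    have h2 : m * Qd + m ≤ m * Qs ℓ k r := by
      calc m * Qd + m = m * (Qd + 1) := by ring
        _ ≤ m * Qs ℓ k r := Nat.mul_le_mul_left _ hstrict
    have h3 : k * Qd ≤ k * Qs ℓ k r := Nat.mul_le_mul_left _ (by omega)
    have hcomm : Qs ℓ k r * m = m * Qs ℓ k r := Nat.mul_comm _ _
    omega


/-- the extremal graph: `k-1` dominating vertices plus disjoint `K_ℓ`-blocks -/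
def Gex (n k ℓ : ℕ) : SimpleGraph (Fin n) :=
  SimpleGraph.fromRel (fun u v =>
    (u : ℕ) < k - 1 ∨ (v : ℕ) < k - 1 ∨ ((u : ℕ) - (k-1)) / ℓ = ((v : ℕ) - (k-1)) / ℓ)

lemma gex_adj {k ℓ : ℕ} {u v : Fin n} :
    (Gex n k ℓ).Adj u v ↔ u ≠ v ∧ ((u : ℕ) < k - 1 ∨ (v : ℕ) < k - 1 ∨
      ((u : ℕ) - (k-1)) / ℓ = ((v : ℕ) - (k-1)) / ℓ) := by
  rw [Gex, SimpleGraph.fromRel_adj]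
  constructor
  · rintro ⟨h1, h2 | h2⟩
    · exact ⟨h1, h2⟩
    · rcases h2 with h | h | h
      · exact ⟨h1, Or.inr (Or.inl h)⟩
      · exact ⟨h1, Or.inl h⟩
      · exact ⟨h1, Or.inr (Or.inr h.symm)⟩
  · rintro ⟨h1, h2⟩
    exact ⟨h1, Or.inl h2⟩

/-- dominating set -/
def D0 (n k : ℕ) (hkn : k - 1 ≤ n) : Finset (Fin n) :=
  (Finset.range (k-1)).attachFin (fun m hm => lt_of_lt_of_le (Finset.mem_range.mp hm) hkn)

lemma mem_D0 {k : ℕ} (hkn : k - 1 ≤ n) {v : Fin n} :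
    v ∈ D0 n k hkn ↔ (v : ℕ) < k - 1 := by
  rw [D0, Finset.mem_attachFin, Finset.mem_range]

lemma card_D0 {k : ℕ} (hkn : k - 1 ≤ n) : (D0 n k hkn).card = k - 1 := by
  rw [D0, Finset.card_attachFin, Finset.card_range]

/-- blocks -/
def blk (n k ℓ b : ℕ) : Finset (Fin n) :=
  (Finset.Ico (k-1+b*ℓ) (min (k-1+b*ℓ+ℓ) n)).attachFin
    (fun x hx => lt_of_lt_of_le (Finset.mem_Ico.mp hx).2 (min_le_right _ _))

lemma mem_blk {k ℓ b : ℕ} {v : Fin n} :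
    v ∈ blk n k ℓ b ↔ k-1+b*ℓ ≤ (v : ℕ) ∧ (v : ℕ) < k-1+b*ℓ+ℓ := by
  rw [blk, Finset.mem_attachFin, Finset.mem_Ico, lt_min_iff]
  exact ⟨fun h => ⟨h.1, h.2.1⟩, fun h => ⟨h.1, h.2, v.isLt⟩⟩

lemma card_blk {k ℓ b : ℕ} (h : k - 1 + b*ℓ + ℓ ≤ n) : (blk n k ℓ b).card = ℓ := by
  rw [blk, Finset.card_attachFin, min_eq_left h, Nat.card_Ico]
  omega

lemma blk_block {k ℓ b : ℕ} (hℓ : 1 ≤ ℓ) {v : Fin n} (hv : v ∈ blk n k ℓ b) :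
    ((v : ℕ) - (k-1)) / ℓ = b := by
  rw [mem_blk] at hv
  refine Nat.div_eq_of_lt_le (by omega) ?_
  have : (b+1) * ℓ = b * ℓ + ℓ := by ring
  omega

lemma blk_ge {k ℓ b : ℕ} {v : Fin n} (hv : v ∈ blk n k ℓ b) : k - 1 ≤ (v : ℕ) := by
  rw [mem_blk] at hv; omega

/-- freeness of the construction -/
lemma lt_div_succ_mul (x ℓ : ℕ) (h : 0 < ℓ) : x < (x / ℓ + 1) * ℓ := by
  have h1 := Nat.div_add_mod x ℓ
  have h2 : x % ℓ < ℓ := Nat.mod_lt x h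
  have h3 : (x / ℓ + 1) * ℓ = ℓ * (x / ℓ) + ℓ := by ring
  omega

lemma gex_free {k ℓ : ℕ} (hℓ : 1 ≤ ℓ) (hk : 1 ≤ k) (hkn : k - 1 + ((n - k + 1)/ℓ) * ℓ = n)
    (hn : k + ℓ ≤ n) :
    ¬ ContainsCopy (Gex n k ℓ) (kStarGraph k ℓ) := by
  rintro ⟨f, hinj, hadj⟩
  set m := (n - k + 1) / ℓ with hm
  -- every star has an image vertex with value < k-1
  have key : ∀ i : Fin k, ∃ j : Fin (ℓ+1), (f (i, j) : ℕ) < k - 1 := by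
    intro i
    by_contra hcon
    push_neg at hcon
    set c := f (i, 0) with hc
    set b := ((c : ℕ) - (k-1)) / ℓ with hb
    have hbm : b < m := by
      have h1 : (c : ℕ) < n := c.isLt
      have h2 : k - 1 ≤ (c : ℕ) := hcon 0
      rw [hb]
      have h3 : (c : ℕ) - (k-1) < m * ℓ := by omega
      exact (Nat.div_lt_iff_lt_mul (show 0 < ℓ by omega)).mpr h3
    -- all images lie in the b-block-or-dominating region; here all ≥ k-1 so in block b
    have hblk : ∀ j : Fin (ℓ+1), f (i, j) ∈ blk n k ℓ b := by
      intro j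
      by_cases hj : j = 0
      · subst hj
        rw [mem_blk]
        have h2 : k - 1 ≤ (c : ℕ) := hcon 0
        constructor
        · have : b * ℓ ≤ (c : ℕ) - (k-1) := by
            have := Nat.div_mul_le_self ((c : ℕ) - (k-1)) ℓ
            calc b * ℓ = (((c : ℕ) - (k-1)) / ℓ) * ℓ := by rw [hb]
              _ ≤ (c : ℕ) - (k-1) := Nat.div_mul_le_self _ _
          omega
        · have : (c : ℕ) - (k-1) < (b + 1) * ℓ := by
            calc (c : ℕ) - (k-1) < (((c : ℕ) - (k-1)) / ℓ + 1) * ℓ :=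
                lt_div_succ_mul _ _ (by omega)
              _ = (b + 1) * ℓ := by rw [hb]
          have h3 : (b+1) * ℓ = b * ℓ + ℓ := by ring
          omega
      · -- adjacency of center and leaf
        have hadj1 : (kStarGraph k ℓ).Adj (i, 0) (i, j) := by
          rw [kStarGraph, SimpleGraph.fromRel_adj]
          exact ⟨by simp [Ne, Prod.ext_iff, hj, (Ne.symm hj)], Or.inl ⟨rfl, rfl⟩⟩
        have := hadj _ _ hadj1
        rw [gex_adj] at this
        obtain ⟨hne, hor⟩ := this
        have h0 : ¬ ((c : ℕ) < k - 1) := by have := hcon 0; omega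
        have hjge : ¬ ((f (i, j) : ℕ) < k - 1) := by have := hcon j; omega
        have hbeq : ((f (i, j) : ℕ) - (k-1)) / ℓ = b := by
          rcases hor with h | h | h
          · exact absurd h h0
          · exact absurd h hjge
          · rw [← h, hb]
        -- f (i,j) ≥ k-1 and in block b
        rw [mem_blk]
        have h2 : k - 1 ≤ (f (i, j) : ℕ) := hcon j
        have hlo : b * ℓ ≤ (f (i, j) : ℕ) - (k-1) := by
          calc b * ℓ = (((f (i, j) : ℕ) - (k-1)) / ℓ) * ℓ := by rw [hbeq]
            _ ≤ (f (i, j) : ℕ) - (k-1) := Nat.div_mul_le_self _ _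
        have hhi : (f (i, j) : ℕ) - (k-1) < (b + 1) * ℓ := by
          calc (f (i, j) : ℕ) - (k-1) < (((f (i, j) : ℕ) - (k-1)) / ℓ + 1) * ℓ :=
              lt_div_succ_mul _ _ (by omega)
            _ = (b + 1) * ℓ := by rw [hbeq]
        have h3 : (b+1) * ℓ = b * ℓ + ℓ := by ring
        omega
    -- ℓ+1 distinct vertices in a block of size ℓ
    have hcard : (ℓ + 1 : ℕ) ≤ (blk n k ℓ b).card := by
      have hinj2 : Function.Injective (fun j : Fin (ℓ+1) => f (i, j)) := by
        intro a b hab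
        have := hinj hab
        exact (Prod.ext_iff.mp this).2
      calc (ℓ + 1 : ℕ) = (univ : Finset (Fin (ℓ+1))).card := by simp
        _ ≤ (blk n k ℓ b).card := by
            refine Finset.card_le_card_of_injOn (fun j => f (i, j)) (fun j _ => hblk j) ?_
            intro a _ b _ hab
            exact hinj2 hab
    have hble : k - 1 + b * ℓ + ℓ ≤ n := by
      have h1 : b + 1 ≤ m := hbm
      have h2 : (b + 1) * ℓ ≤ m * ℓ := Nat.mul_le_mul_right ℓ h1
      have h3 : (b+1) * ℓ = b * ℓ + ℓ := by ring
      omega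
    rw [card_blk hble] at hcard
    omega
  -- choose the low-value vertices
  choose w hw using key
  have hwinj : Function.Injective (fun i : Fin k => f (i, w i)) := by
    intro a b hab
    exact (Prod.ext_iff.mp (hinj hab)).1
  have : k ≤ k - 1 := by
    have hcard : (univ : Finset (Fin k)).card ≤ (D0 n k (by omega)).card := by
      refine Finset.card_le_card_of_injOn (fun i => f (i, w i)) ?_ ?_
      · intro i _
        rw [mem_coe, mem_D0]
        exact hw i
      · intro a _ b _ hab
        exact hwinj hab
    rw [card_D0] at hcard
    simpa using hcard
  omega


lemma gex_count {k ℓ r : ℕ} [DecidableRel (Gex n k ℓ).Adj] (hℓ : 1 ≤ ℓ) (hk : 1 ≤ k)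
    (hkn : k - 1 + ((n - k + 1)/ℓ) * ℓ = n) :
    ((ℓ + k - 1).choose r - (k-1).choose r) * ((n - k + 1)/ℓ) + (k-1).choose r ≤
      ((Gex n k ℓ).cliqueFinset r).card := by
  classical
  set m := (n - k + 1) / ℓ with hm
  have hkn' : k - 1 ≤ n := by omega
  set Small := (D0 n k hkn').powersetCard r with hSmall
  set Big := (Finset.range m).biUnion
    (fun b => (((D0 n k hkn') ∪ blk n k ℓ b).powersetCard r).filter
      (fun K => ¬ K ⊆ D0 n k hkn')) with hBig
  have hblk_le : ∀ b, b < m → k - 1 + b*ℓ + ℓ ≤ n := by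
    intro b hb
    have h2 : (b + 1) * ℓ ≤ m * ℓ := Nat.mul_le_mul_right ℓ hb
    have h3 : (b+1) * ℓ = b * ℓ + ℓ := by ring
    omega
  have hdisjD0blk : ∀ b, Disjoint (D0 n k hkn') (blk n k ℓ b) := by
    intro b
    rw [Finset.disjoint_left]
    intro a ha hb
    have h1 := (mem_D0 hkn').mp ha
    have h2 := blk_ge hb
    omega
  -- Small ∪ Big are cliques
  have hsub : Small ∪ Big ⊆ (Gex n k ℓ).cliqueFinset r := by
    intro K hK
    rw [mem_union] at hK
    rw [SimpleGraph.mem_cliqueFinset_iff]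
    rcases hK with hK | hK
    · rw [hSmall, mem_powersetCard] at hK
      refine ⟨?_, hK.2⟩
      intro u hu v hv hne
      rw [gex_adj]
      exact ⟨hne, Or.inl ((mem_D0 hkn').mp (hK.1 hu))⟩
    · rw [hBig, mem_biUnion] at hK
      obtain ⟨b, _, hK⟩ := hK
      rw [mem_filter, mem_powersetCard] at hK
      refine ⟨?_, hK.1.2⟩
      intro u hu v hv hne
      rw [gex_adj]
      refine ⟨hne, ?_⟩
      rcases mem_union.mp (hK.1.1 hu) with hu' | hu'
      · exact Or.inl ((mem_D0 hkn').mp hu')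
      · rcases mem_union.mp (hK.1.1 hv) with hv' | hv'
        · exact Or.inr (Or.inl ((mem_D0 hkn').mp hv'))
        · exact Or.inr (Or.inr (by rw [blk_block hℓ hu', blk_block hℓ hv']))
  have hdisj : Disjoint Small Big := by
    rw [Finset.disjoint_left]
    intro K hK hK'
    rw [hBig, mem_biUnion] at hK'
    obtain ⟨b, _, hK'⟩ := hK'
    rw [mem_filter] at hK'
    exact hK'.2 ((mem_powersetCard.mp hK).1)
  have hSmallcard : Small.card = (k-1).choose r := by
    rw [hSmall, card_powersetCard, card_D0]
  have hBigcard : Big.card = m * ((ℓ + k - 1).choose r - (k-1).choose r) := by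
    rw [hBig, Finset.card_biUnion]
    · have hper : ∀ b ∈ Finset.range m,
          ((((D0 n k hkn') ∪ blk n k ℓ b).powersetCard r).filter
            (fun K => ¬ K ⊆ D0 n k hkn')).card
          = (ℓ + k - 1).choose r - (k-1).choose r := by
        intro b hb
        have hcardU : ((D0 n k hkn') ∪ blk n k ℓ b).card = k - 1 + ℓ := by
          rw [card_union_of_disjoint (hdisjD0blk b), card_D0,
            card_blk (hblk_le b (mem_range.mp hb))]
        have htot : (((D0 n k hkn') ∪ blk n k ℓ b).powersetCard r).card
            = (k - 1 + ℓ).choose r := by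
          rw [card_powersetCard, hcardU]
        have hfilT : (((D0 n k hkn') ∪ blk n k ℓ b).powersetCard r).filter
            (fun K => K ⊆ D0 n k hkn') = (D0 n k hkn').powersetCard r := by
          ext K
          rw [mem_filter, mem_powersetCard, mem_powersetCard]
          constructor
          · rintro ⟨⟨_, hc⟩, hsubD⟩
            exact ⟨hsubD, hc⟩
          · rintro ⟨hsubD, hc⟩
            exact ⟨⟨hsubD.trans subset_union_left, hc⟩, hsubD⟩
        have hsum := Finset.card_filter_add_card_filter_not
          (s := ((D0 n k hkn') ∪ blk n k ℓ b).powersetCard r)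
          (p := fun K => K ⊆ D0 n k hkn')
        rw [hfilT, htot, card_powersetCard, card_D0] at hsum
        have heq : k - 1 + ℓ = ℓ + k - 1 := by omega
        rw [heq] at hsum
        omega
      rw [Finset.sum_congr rfl hper, Finset.sum_const, Finset.card_range, smul_eq_mul]
    · intro b hb b' hb' hne
      simp only [Function.onFun]; rw [Finset.disjoint_left]
      intro K hK hK'
      rw [mem_filter, mem_powersetCard] at hK hK'
      obtain ⟨x, hxK, hxD⟩ := Finset.not_subset.mp hK.2
      have hxb : x ∈ blk n k ℓ b := by
        rcases mem_union.mp (hK.1.1 hxK) with h | h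
        · exact absurd h hxD
        · exact h
      have hxb' : x ∈ blk n k ℓ b' := by
        rcases mem_union.mp (hK'.1.1 hxK) with h | h
        · exact absurd h hxD
        · exact h
      exact hne (by rw [← blk_block hℓ hxb, ← blk_block hℓ hxb'])
  calc ((ℓ + k - 1).choose r - (k-1).choose r) * m + (k-1).choose r
      = Small.card + Big.card := by rw [hSmallcard, hBigcard]; ring
    _ = (Small ∪ Big).card := (card_union_of_disjoint hdisj).symm
    _ ≤ ((Gex n k ℓ).cliqueFinset r).card := card_le_card hsub


end KStar

/-- For `r ≥ 3`, `r ≤ ℓ + k - 2`, `ℓ ∣ n - k + 1` and `n` large enough, the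
maximum number of `K_r`'s in an `n`-vertex `k·S_ℓ`-free graph equals
`(C(ℓ+k-1,r) - C(k-1,r))·(n-k+1)/ℓ + C(k-1,r)`. -/

theorem generalized_turan_kstar (ℓ k r : ℕ) (hℓ : 1 ≤ ℓ) (hk : 1 ≤ k) (hr : 3 ≤ r)
    (hrlk : r ≤ ℓ + k - 2) :
    ∃ N : ℕ, ∀ n ≥ N, ℓ ∣ (n - k + 1) →
      IsGreatest
        {c | ∃ G : SimpleGraph (Fin n), ¬ ContainsCopy G (kStarGraph k ℓ) ∧ numKr G r = c}
        (((ℓ + k - 1).choose r - (k - 1).choose r) * ((n - k + 1) / ℓ)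
          + (k - 1).choose r) := by
  classical
  refine ⟨KStar.Nb ℓ k r, ?_⟩
  intro n hn hdvd
  have hnk : k + ℓ + 10 ≤ n := le_trans (by unfold KStar.Nb; omega) hn
  have hmℓ : ((n - k + 1) / ℓ) * ℓ = n - k + 1 := Nat.div_mul_cancel hdvd
  have hkn : k - 1 + ((n - k + 1)/ℓ) * ℓ = n := by omega
  have hQs : (ℓ + k - 1).choose r - (k-1).choose r = KStar.Qs ℓ k r := by
    have := KStar.vand ℓ k r hk; omega
  letI : ∀ G : SimpleGraph (Fin n), DecidableRel G.Adj := fun G => Classical.decRel _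
  constructor
  · refine ⟨KStar.Gex n k ℓ, KStar.gex_free hℓ hk hkn (by omega), ?_⟩
    have hle := KStar.gex_count (n := n) (k := k) (ℓ := ℓ) (r := r) hℓ hk hkn
    have hge := KStar.upper (KStar.Gex n k ℓ) hℓ hk hr hrlk hn hdvd
      (KStar.gex_free hℓ hk hkn (by omega))
    have hcardeq : numKr (KStar.Gex n k ℓ) r = (((KStar.Gex n k ℓ)).cliqueFinset r).card := rfl
    rw [hQs] at hle
    rw [hcardeq, hQs]
    exact le_antisymm hge hle
  · rintro c ⟨G, hGfree, rfl⟩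
    have hub := KStar.upper G hℓ hk hr hrlk hn hdvd hGfree
    have hcardeq : numKr G r = ((G.cliqueFinset r)).card := rfl
    rw [hcardeq, hQs]
    exact hub
end

section
/- For any graph F and integer r ≥ 2, ex(n, K_r, F) ≤ ex_r(n, Berge-F): if G is an n-vertex F-free graph, then the r-uniform hypergraph whose hyperedges are the vertex sets of the r-cliques of G contains no Berge-F. -/
open Finset

/-- If `G` is `F`-free, then the hypergraph of vertex sets of `r`-cliques of `G`
contains no Berge-`F`; consequently `ex(n, K_r, F) ≤ ex_r(n, Berge-F)`. -/
theorem clique_hypergraph_berge_free {W : Type*} (F : SimpleGraph W) (r n : ℕ) (hr : 2 ≤ r) :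
    (∀ (G : SimpleGraph (Fin n)), ¬ ContainsCopy G F →
      letI := Classical.decRel G.Adj
      ¬ ContainsBerge (G.cliqueFinset r) F) ∧
    sSup {c | ∃ G : SimpleGraph (Fin n), ¬ ContainsCopy G F ∧ numKr G r = c} ≤
      sSup {c | ∃ H : Finset (Finset (Fin n)), (∀ e ∈ H, e.card = r) ∧
        ¬ ContainsBerge H F ∧ H.card = c} := by
  have key : ∀ (G : SimpleGraph (Fin n)), ¬ ContainsCopy G F →
      letI := Classical.decRel G.Adj
      ¬ ContainsBerge (G.cliqueFinset r) F := by
    intro G hG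
    letI := Classical.decRel G.Adj
    rintro ⟨f, g, hf, hginj, hgmem, hgcontain⟩
    apply hG
    refine ⟨f, hf, fun a b hab => ?_⟩
    have he : s(a, b) ∈ F.edgeSet := hab
    have hclique : G.IsNClique r (g s(a, b)) :=
      (SimpleGraph.mem_cliqueFinset_iff).mp (hgmem _ he)
    have ha : f a ∈ g s(a, b) := hgcontain _ he a (Sym2.mem_mk_left a b)
    have hb : f b ∈ g s(a, b) := hgcontain _ he b (Sym2.mem_mk_right a b)
    have hne : f a ≠ f b := fun h => (F.ne_of_adj hab) (hf h)
    exact hclique.isClique ha hb hne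
  refine ⟨key, ?_⟩
  apply csSup_le_csSup'
  · refine ⟨Fintype.card (Finset (Fin n)), ?_⟩
    rintro c ⟨H, _, _, rfl⟩
    exact Finset.card_le_univ H
  · rintro c ⟨G, hG, rfl⟩
    letI := Classical.decRel G.Adj
    refine ⟨G.cliqueFinset r, ?_, ?_, rfl⟩
    · intro e he
      exact ((SimpleGraph.mem_cliqueFinset_iff).mp he).card_eq
    · exact key G hG
end
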